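/- arXiv:2507.09355 — 2 statements merged into one kernel-verified Lean document; each statement's English description precedes it below -/
import Mathlib

section
/- Let d ≥ 1 and for k = 1, …, d define P_k = {x ∈ [0,1]^d : k−1 ≤ x_1 + ⋯ + x_d ≤ k}, and let Δ = {x ∈ ℝ^d : x_i ≥ 0 for all i, x_1 + ⋯ + x_d ≤ 1} be the standard simplex. Then for every positive integer n, the dilated simplex nΔ is the union, over k = 1, …, d and over z ∈ ℤ^d with all z_i ≥ 0 and z_1 + ⋯ + z_d ≤ n − k, of the translates z + P_k; these translates have pairwise disjoint interiors; and for each k the number of vectors z ∈ ℤ^d with z_i ≥ 0 and z_1 + ⋯ + z_d ≤ n − k equals the binomial coefficient C(n − k + d, d). -/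
/-!
Write `x ∈ nΔ` as `x = z + y` with `z ∈ ℤ^d`, `z ≥ 0`, `y ∈ [0,1]^d`, choosing `y i ∈ (0,1]`
whenever `x i > 0`; then `∑ y i > 0` unless `x = 0`, and `k + 1 = ⌈∑ y i⌉` gives the layer, with
`∑ z i + k + 1 ≤ n` because `∑ z i + ∑ y i ≤ n` and `⌈∑ y i⌉ < ∑ y i + 1`.

Conversely, coordinates and the coordinate sum are open maps, so on the interior of `z + P_k`
the bounds defining `z + P_k` become strict: `⌊w⌋ = z` and `⌊∑ w i⌋ = ∑ z i + k`. Hence `(k, z)`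
is read off any interior point and distinct translates have disjoint interiors.

The count is stars and bars after adding a slack coordinate: `z ≥ 0` with `∑ z i ≤ m` are the
`m`-element multisets on `d + 1` letters.
-/

open Set Pointwise

variable {ι : Type*} [Fintype ι]

section

variable (ι)

def dilatedSimplex (t : ℝ) : Set (ι → ℝ) := {x | (∀ i, 0 ≤ x i) ∧ ∑ i, x i ≤ t}

def latticeSimplex (m : ℤ) : Set (ι → ℤ) := {z | (∀ i, 0 ≤ z i) ∧ ∑ i, z i ≤ m}

def cubeSlab (k : ℕ) : Set (ι → ℝ) :=
  {x ∈ Icc (0 : ι → ℝ) 1 | (k : ℝ) ≤ ∑ i, x i ∧ ∑ i, x i ≤ k + 1}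

end

def natSumLeEquiv (m : ℕ) : {f : ι → ℕ // ∑ i, f i ≤ m} ≃ {g : Option ι → ℕ // ∑ i, g i = m} where
  toFun f := ⟨fun o => o.elim (m - ∑ i, f.1 i) f.1, by
    rw [Fintype.sum_option]; exact Nat.sub_add_cancel f.2⟩
  invFun g := ⟨fun i => g.1 (some i), by
    simpa only [← g.2, Fintype.sum_option] using Nat.le_add_left _ _⟩
  left_inv f := rfl
  right_inv g := by
    obtain ⟨g, hg⟩ := g
    ext (_ | i)
    · simp [← hg, Fintype.sum_option]
    · rfl

theorem card_natSumLe (m : ℕ) :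
    Nat.card {f : ι → ℕ // ∑ i, f i ≤ m} = (m + Fintype.card ι).choose (Fintype.card ι) := by
  classical
  rw [Nat.card_congr ((natSumLeEquiv m).trans (Sym.equivNatSumOfFintype (Option ι) m).symm),
    Nat.card_eq_fintype_card, Sym.card_sym_eq_choose, Fintype.card_option, add_right_comm,
    add_tsub_cancel_right, add_comm, Nat.choose_symm_add]

theorem ncard_latticeSimplex (m : ℕ) :
    (latticeSimplex ι m).ncard = (m + Fintype.card ι).choose (Fintype.card ι) := by
  have hrange : latticeSimplex ι m = range (fun (f : {f : ι → ℕ // ∑ i, f i ≤ m}) i => (f.1 i : ℤ)) := by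
    ext z
    constructor
    · rintro ⟨hz0, hzm⟩
      refine ⟨⟨fun i => (z i).toNat, ?_⟩, funext fun i => Int.toNat_of_nonneg (hz0 i)⟩
      zify
      simpa only [Int.toNat_of_nonneg (hz0 _)] using hzm
    · rintro ⟨⟨f, hf⟩, rfl⟩
      exact ⟨fun i => Int.natCast_nonneg _, by simpa using (Nat.cast_le (α := ℤ)).2 hf⟩
  rw [hrange, ← Set.image_univ, Set.ncard_image_of_injective, Set.ncard_univ, card_natSumLe]
  intro f g h
  ext i
  simpa using congrFun h i

theorem latticeSimplex_eq_empty {m : ℤ} (hm : m < 0) : latticeSimplex ι m = ∅ :=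
  eq_empty_of_forall_notMem fun _ ⟨hz0, hzm⟩ =>
    (hm.trans_le (Finset.sum_nonneg fun i _ => hz0 i)).not_ge hzm

theorem ncard_latticeSimplex_sub {n k : ℕ} (hk : k < Fintype.card ι) :
    (latticeSimplex ι (n - (k + 1))).ncard =
      (n + Fintype.card ι - (k + 1)).choose (Fintype.card ι) := by
  by_cases hkn : k + 1 ≤ n
  · have : (n : ℤ) - (k + 1) = ((n - (k + 1) : ℕ) : ℤ) := by omega
    rw [this, ncard_latticeSimplex]
    congr 1
    omega
  · rw [latticeSimplex_eq_empty (by omega), ncard_empty, Nat.choose_eq_zero_of_lt (by omega)]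

theorem exists_nonneg_int_add_mem_Icc {t : ℝ} (ht : 0 ≤ t) :
    ∃ m : ℤ, 0 ≤ m ∧ ∃ r ∈ Icc (0 : ℝ) 1, m + r = t ∧ (0 < t → 0 < r) := by
  rcases ht.eq_or_lt with rfl | ht
  · exact ⟨0, le_rfl, 0, by simp, by simp, fun h => h⟩
  · have hc : 0 < ⌈t⌉ := Int.ceil_pos.2 ht
    refine ⟨⌈t⌉ - 1, by omega, t - (⌈t⌉ - 1), ⟨?_, ?_⟩, by push_cast; ring, fun _ => ?_⟩
    · linarith [Int.ceil_lt_add_one t]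
    · linarith [Int.le_ceil t]
    · linarith [Int.ceil_lt_add_one t]

theorem exists_mem_latticeSimplex_add_mem_cubeSlab [Nonempty ι] {n : ℕ} (hn : 0 < n)
    {x : ι → ℝ} (hx : x ∈ dilatedSimplex ι n) :
    ∃ k < Fintype.card ι, ∃ z ∈ latticeSimplex ι (n - (k + 1)), ∃ y ∈ cubeSlab ι k,
      (Int.cast ∘ z : ι → ℝ) + y = x := by
  obtain ⟨hx0, hxn⟩ := hx
  by_cases hx : x = 0
  · subst hx
    refine ⟨0, Fintype.card_pos, 0, ⟨fun _ => le_rfl, by simp; omega⟩, 0, ?_, by ext; simp⟩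
    simp [cubeSlab]
  choose z hz0 y hy hzy hpos using fun i => exists_nonneg_int_add_mem_Icc (hx0 i)
  obtain rfl : x = (Int.cast ∘ z : ι → ℝ) + y := funext fun i => (hzy i).symm
  have hs0 : 0 < ∑ i, y i := by
    obtain ⟨i₀, hi₀⟩ := Function.ne_iff.1 hx
    exact Finset.sum_pos' (fun i _ => (hy i).1)
      ⟨i₀, Finset.mem_univ _, hpos i₀ ((hx0 i₀).lt_of_ne' hi₀)⟩
  have hsd : ∑ i, y i ≤ Fintype.card ι := by
    simpa using Finset.sum_le_sum fun i (_ : i ∈ Finset.univ) => (hy i).2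
  have hsum : ((∑ i, z i : ℤ) : ℝ) + ∑ i, y i ≤ n := by
    simpa [Finset.sum_add_distrib] using hxn
  obtain ⟨k, hk⟩ : ∃ k : ℕ, (k : ℤ) + 1 = ⌈∑ i, y i⌉ :=
    ⟨(⌈∑ i, y i⌉ - 1).toNat, by have := Int.ceil_pos.2 hs0; omega⟩
  have hkR : (k : ℝ) + 1 = ⌈∑ i, y i⌉ := by exact_mod_cast hk
  refine ⟨k, ?_, z, ⟨hz0, ?_⟩, y, ⟨⟨fun i => (hy i).1, fun i => (hy i).2⟩, ?_, ?_⟩, rfl⟩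
  · have : ⌈∑ i, y i⌉ ≤ Fintype.card ι := Int.ceil_le.2 (by exact_mod_cast hsd)
    omega
  · have : ((∑ i, z i : ℤ) : ℝ) + ⌈∑ i, y i⌉ < n + 1 := by
      linarith [Int.ceil_lt_add_one (∑ i, y i)]
    have : ∑ i, z i + ⌈∑ i, y i⌉ < n + 1 := by exact_mod_cast this
    omega
  · linarith [Int.ceil_lt_add_one (∑ i, y i)]
  · linarith [Int.le_ceil (∑ i, y i)]

theorem add_mem_dilatedSimplex {n k : ℕ} {z : ι → ℤ} {y : ι → ℝ}
    (hz : z ∈ latticeSimplex ι (n - (k + 1))) (hy : y ∈ cubeSlab ι k) :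
    (Int.cast ∘ z : ι → ℝ) + y ∈ dilatedSimplex ι n := by
  obtain ⟨hz0, hzn⟩ := hz
  obtain ⟨⟨hy0, -⟩, -, hyk⟩ := hy
  refine ⟨fun i => add_nonneg (Int.cast_nonneg (hz0 i)) (hy0 i), ?_⟩
  have : ((∑ i, z i : ℤ) : ℝ) ≤ n - (k + 1) := by exact_mod_cast hzn
  simp only [Pi.add_apply, Function.comp_apply, Finset.sum_add_distrib]
  push_cast at this
  linarith

theorem isOpenMap_sum_apply [Nonempty ι] : IsOpenMap (fun x : ι → ℝ => ∑ i, x i) := by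
  classical
  obtain ⟨i₀⟩ := ‹Nonempty ι›
  have hsurj : Function.Surjective (∑ i, LinearMap.proj i : (ι → ℝ) →ₗ[ℝ] ℝ) :=
    fun t => ⟨Pi.single i₀ t, by simp⟩
  convert LinearMap.isOpenMap_of_finiteDimensional _ hsurj
  simp

theorem floor_eq_of_mem_interior_vadd_cubeSlab [Nonempty ι] {z : ι → ℤ} {k : ℕ} {w : ι → ℝ}
    (hw : w ∈ interior ((Int.cast ∘ z : ι → ℝ) +ᵥ cubeSlab ι k)) :
    (fun i => ⌊w i⌋) = z ∧ ⌊∑ i, w i⌋ = ∑ i, z i + k := by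
  constructor
  · ext i
    have hmaps : MapsTo (fun x : ι → ℝ => x i) ((Int.cast ∘ z : ι → ℝ) +ᵥ cubeSlab ι k)
        (Icc (z i : ℝ) (z i + 1)) := by
      rintro _ ⟨y, ⟨⟨hy0, hy1⟩, -⟩, rfl⟩
      exact ⟨by simpa using hy0 i, by simpa using hy1 i⟩
    have := (isOpenMap_eval i).mapsTo_interior hmaps hw
    rw [interior_Icc] at this
    exact Int.floor_eq_iff.2 ⟨this.1.le, this.2⟩
  · have hmaps : MapsTo (fun x : ι → ℝ => ∑ i, x i)
        ((Int.cast ∘ z : ι → ℝ) +ᵥ cubeSlab ι k)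
        (Icc (((∑ i, z i + k : ℤ)) : ℝ) ((∑ i, z i + k : ℤ) + 1)) := by
      rintro _ ⟨y, ⟨-, hk, hk1⟩, rfl⟩
      simp only [vadd_eq_add, Pi.add_apply, Function.comp_apply, Finset.sum_add_distrib]
      push_cast
      constructor <;> linarith
    have := isOpenMap_sum_apply.mapsTo_interior hmaps hw
    rw [interior_Icc] at this
    exact Int.floor_eq_iff.2 ⟨this.1.le, this.2⟩

theorem disjoint_interior_vadd_cubeSlab [Nonempty ι] {z z' : ι → ℤ} {k k' : ℕ}
    (h : (k, z) ≠ (k', z')) :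
    Disjoint (interior ((Int.cast ∘ z : ι → ℝ) +ᵥ cubeSlab ι k))
      (interior ((Int.cast ∘ z' : ι → ℝ) +ᵥ cubeSlab ι k')) := by
  refine Set.disjoint_left.2 fun w hw hw' => h ?_
  obtain ⟨hz, hk⟩ := floor_eq_of_mem_interior_vadd_cubeSlab hw
  obtain ⟨hz', hk'⟩ := floor_eq_of_mem_interior_vadd_cubeSlab hw'
  obtain rfl : z = z' := hz.symm.trans hz'
  obtain rfl : k = k' := by omega
  rfl

/-- `k : Fin d` encodes the layer `k + 1 ∈ {1, …, d}` of the informal statement. -/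
theorem dilated_simplex_partition (d : ℕ) (hd : 1 ≤ d)
    (P : Fin d → Set (Fin d → ℝ))
    (hP : ∀ k : Fin d, P k =
      {x ∈ Set.Icc (0 : Fin d → ℝ) 1 |
        ((k : ℕ) : ℝ) ≤ ∑ i, x i ∧ ∑ i, x i ≤ (k : ℕ) + 1})
    (n : ℕ) (hn : 0 < n) :
    ({x : Fin d → ℝ | (∀ i, 0 ≤ x i) ∧ ∑ i, x i ≤ (n : ℝ)} =
        ⋃ k : Fin d, ⋃ z ∈ {z : Fin d → ℤ | (∀ i, 0 ≤ z i) ∧ ∑ i, z i ≤ (n : ℤ) - ((k : ℕ) + 1)},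
          (fun y : Fin d → ℝ => (fun i => (z i : ℝ)) + y) '' P k) ∧
    (∀ (k k' : Fin d) (z z' : Fin d → ℤ),
      ((∀ i, 0 ≤ z i) ∧ ∑ i, z i ≤ (n : ℤ) - ((k : ℕ) + 1)) →
      ((∀ i, 0 ≤ z' i) ∧ ∑ i, z' i ≤ (n : ℤ) - ((k' : ℕ) + 1)) →
      (k, z) ≠ (k', z') →
      interior ((fun y : Fin d → ℝ => (fun i => (z i : ℝ)) + y) '' P k) ∩
        interior ((fun y : Fin d → ℝ => (fun i => (z' i : ℝ)) + y) '' P k') = ∅) ∧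
    (∀ k : Fin d,
      Set.ncard {z : Fin d → ℤ | (∀ i, 0 ≤ z i) ∧ ∑ i, z i ≤ (n : ℤ) - ((k : ℕ) + 1)} =
        Nat.choose (n + d - ((k : ℕ) + 1)) d) := by
  have : Nonempty (Fin d) := ⟨⟨0, hd⟩⟩
  obtain rfl : P = fun k : Fin d => cubeSlab (Fin d) k := funext hP
  refine ⟨?_, fun k k' z z' _ _ hne => ?_, fun k => ?_⟩
  · ext x
    simp only [mem_iUnion]
    constructor
    · intro hx
      obtain ⟨k, hk, z, hz, y, hy, rfl⟩ := exists_mem_latticeSimplex_add_mem_cubeSlab hn hx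
      exact ⟨⟨k, by simpa using hk⟩, z, hz, y, hy, rfl⟩
    · rintro ⟨k, z, hz, y, hy, rfl⟩
      exact add_mem_dilatedSimplex hz hy
  · rw [← disjoint_iff_inter_eq_empty]
    refine disjoint_interior_vadd_cubeSlab fun h => hne ?_
    simp only [Prod.mk.injEq] at h ⊢
    exact ⟨Fin.ext h.1, h.2⟩
  · have := ncard_latticeSimplex_sub (n := n) (k.isLt.trans_eq (Fintype.card_fin d).symm)
    rw [Fintype.card_fin] at this
    exact this
end

section
/- Let d ≥ 3, regard ℝ^{d+1} = ℝ^d × ℝ, let P = {(x, 0) ∈ ℝ^{d+1} : x ∈ [0,1]^d, 1 ≤ x_1 + ⋯ + x_d ≤ d − 1}, and let e = {(0, …, 0, t) : t ∈ [0,1]} be the segment from the origin to the last standard basis vector. Then for almost every y ∈ [0,1]^{d+1}, |(P + y) ∩ ℤ^{d+1}| = 0 and |(e + y) ∩ ℤ^{d+1}| = 0, yet the set {y ∈ [0,1]^{d+1} : |((P ⊕ e) + y) ∩ ℤ^{d+1}| = 1} has positive Lebesgue measure, where P ⊕ e is the Minkowski sum. In particular, the planar identity X_{P⊕Q} = X_P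 + X_Q + const fails in dimension d + 1. -/
/-!
`P` lies in the hyperplane `x_{d+1} = 0` and `e` in the line `x_1 = ⋯ = x_d = 0`, so a
translate by `y` meets `ℤ^{d+1}` only if some coordinate of `y` is an integer, a null event.
On the other hand `P ⊕ e ⊆ [0,1]^{d+1}`, so for `y ∈ (0,1)^{d+1}` the only candidate lattice
point is `(1,…,1)`, and it is attained as soon as `1 - y ∈ P ⊕ e`. On the open box
`(1/3, 2/3)^{d+1}` the sum of the first `d` coordinates of `1 - y` lies in
`[d/3, 2d/3] ⊆ [1, d-1]`, which is where `d ≥ 3` enters.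
-/

open MeasureTheory Pointwise Set

noncomputable def latticeCount (d : ℕ) (C : Set (Fin d → ℝ)) (x : Fin d → ℝ) : ℕ :=
  Set.ncard {z : Fin d → ℤ | (fun i => (z i : ℝ)) - x ∈ C}

def truncatedCube (d : ℕ) : Set (Fin (d + 1) → ℝ) :=
  {y | (∀ i : Fin d, y i.castSucc ∈ Icc (0 : ℝ) 1) ∧ y (Fin.last d) = 0 ∧
    1 ≤ ∑ i : Fin d, y i.castSucc ∧ ∑ i : Fin d, y i.castSucc ≤ (d : ℝ) - 1}

def verticalSegment (d : ℕ) : Set (Fin (d + 1) → ℝ) :=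
  {y | (∀ i : Fin d, y i.castSucc = 0) ∧ y (Fin.last d) ∈ Icc (0 : ℝ) 1}

theorem latticeCount_eq_zero_of_eval_eq_zero {n : ℕ} {C : Set (Fin n → ℝ)} {x : Fin n → ℝ}
    (j : Fin n) (hC : ∀ v ∈ C, v j = 0) (hx : ∀ z : ℤ, x j ≠ (z : ℝ)) :
    latticeCount n C x = 0 := by
  have hempty : {z : Fin n → ℤ | (fun i => (z i : ℝ)) - x ∈ C} = ∅ :=
    eq_empty_of_forall_notMem fun z hz => hx (z j) (sub_eq_zero.1 (hC _ hz)).symm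
  rw [latticeCount, hempty, ncard_empty]

theorem ae_eval_ne_intCast {ι : Type*} [Fintype ι] (j : ι) :
    ∀ᵐ x ∂(volume : Measure (ι → ℝ)), ∀ z : ℤ, x j ≠ (z : ℝ) :=
  ae_all_iff.2 fun z => Measure.ae_eval_ne (fun _ : ι => (volume : Measure ℝ)) j (z : ℝ)

theorem Int.eq_one_of_sub_mem_Icc {a : ℤ} {x : ℝ} (hx : x ∈ Ioo 0 1)
    (h : (a : ℝ) - x ∈ Icc 0 1) : a = 1 := by
  have hpos : (0 : ℝ) < a := by linarith [hx.1, h.1]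
  have hlt : (a : ℝ) < 2 := by linarith [hx.2, h.2]
  have : 0 < a := by exact_mod_cast hpos
  have : a < 2 := by exact_mod_cast hlt
  omega

theorem latticeCount_eq_one_of_subset_Icc {n : ℕ} {C : Set (Fin n → ℝ)} {x : Fin n → ℝ}
    (hC : C ⊆ Icc 0 1) (hx : ∀ j, x j ∈ Ioo 0 1) (h1 : 1 - x ∈ C) :
    latticeCount n C x = 1 := by
  rw [latticeCount, ncard_eq_one]
  refine ⟨1, eq_singleton_iff_unique_mem.2 ⟨?_, fun z hz => ?_⟩⟩
  · simp only [mem_ofPred_eq, Pi.one_apply, Int.cast_one]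
    exact h1
  · exact funext fun j => Int.eq_one_of_sub_mem_Icc (hx j) ⟨(hC hz).1 j, (hC hz).2 j⟩

theorem sum_mem_Icc_of_forall_mem_Icc {d : ℕ} (hd : 3 ≤ d) {x : Fin d → ℝ}
    (hx : ∀ i, x i ∈ Icc (1 / 3 : ℝ) (2 / 3)) : ∑ i, x i ∈ Icc (1 : ℝ) (d - 1) := by
  have hlo : ∑ _i : Fin d, (1 / 3 : ℝ) ≤ ∑ i, x i := Finset.sum_le_sum fun i _ => (hx i).1
  have hhi : ∑ i, x i ≤ ∑ _i : Fin d, (2 / 3 : ℝ) := Finset.sum_le_sum fun i _ => (hx i).2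
  have hd' : (3 : ℝ) ≤ d := by exact_mod_cast hd
  simp only [Finset.sum_const, Finset.card_univ, Fintype.card_fin, nsmul_eq_mul] at hlo hhi
  constructor <;> linarith

theorem truncatedCube_add_verticalSegment_subset (d : ℕ) :
    truncatedCube d + verticalSegment d ⊆ Icc 0 1 := by
  rintro _ ⟨p, ⟨hp, hp_last, -⟩, q, ⟨hq, hq_last⟩, rfl⟩
  have hmem : ∀ j, (p + q) j ∈ Icc (0 : ℝ) 1 :=
    Fin.lastCases (by simpa [hp_last] using hq_last) fun i => by simpa [hq i] using hp i
  exact ⟨fun j => (hmem j).1, fun j => (hmem j).2⟩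

theorem one_sub_mem_truncatedCube_add_verticalSegment {d : ℕ} (hd : 3 ≤ d)
    {y : Fin (d + 1) → ℝ} (hy : ∀ j, y j ∈ Icc (1 / 3 : ℝ) (2 / 3)) :
    1 - y ∈ truncatedCube d + verticalSegment d := by
  have hne : ∀ i : Fin d, i.castSucc ≠ Fin.last d := fun i => (Fin.castSucc_lt_last i).ne
  have h1y : ∀ j, (1 - y) j ∈ Icc (1 / 3 : ℝ) (2 / 3) := fun j => by
    simp only [Pi.sub_apply, Pi.one_apply, mem_Icc]
    constructor <;> linarith [(hy j).1, (hy j).2]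
  have hsum := sum_mem_Icc_of_forall_mem_Icc hd fun i => h1y i.castSucc
  refine ⟨Function.update (1 - y) (Fin.last d) 0, ⟨fun i => ?_, by simp, ?_⟩,
    Pi.single (Fin.last d) ((1 - y) (Fin.last d)), ⟨fun i => by simp [hne i], ?_⟩, ?_⟩
  · simp only [Function.update_of_ne (hne i)]
    exact ⟨by linarith [(h1y i.castSucc).1], by linarith [(h1y i.castSucc).2]⟩
  · simp only [Function.update_of_ne (hne _)]
    exact hsum
  · simp only [Pi.single_eq_same, mem_Icc]
    constructor <;> linarith [(h1y (Fin.last d)).1, (h1y (Fin.last d)).2]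
  · funext j
    refine Fin.lastCases (by simp) (fun i => by simp [hne i]) j

/-- Counterexample to the Minkowski-sum identity in dimension `d+1 ≥ 4`: with
`P = {(x,0) : x ∈ [0,1]^d, 1 ≤ ∑ x_i ≤ d−1}` and `e` the segment from the origin to the
last basis vector, both `X_P = 0` and `X_e = 0` almost surely, yet `X_{P ⊕ e} = 1` with
positive probability. -/
theorem minkowski_sum_counterexample (d : ℕ) (hd : 3 ≤ d)
    (P e : Set (Fin (d + 1) → ℝ))
    (hP : P = {y : Fin (d + 1) → ℝ |
      (∀ i : Fin d, y i.castSucc ∈ Set.Icc (0 : ℝ) 1) ∧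
      y (Fin.last d) = 0 ∧
      1 ≤ ∑ i : Fin d, y i.castSucc ∧ ∑ i : Fin d, y i.castSucc ≤ (d : ℝ) - 1})
    (he : e = {y : Fin (d + 1) → ℝ |
      (∀ i : Fin d, y i.castSucc = 0) ∧ y (Fin.last d) ∈ Set.Icc (0 : ℝ) 1}) :
    (∀ᵐ y ∂(volume.restrict (Set.Icc (0 : Fin (d + 1) → ℝ) 1)),
      latticeCount (d + 1) P y = 0 ∧ latticeCount (d + 1) e y = 0) ∧
    0 < volume {y ∈ Set.Icc (0 : Fin (d + 1) → ℝ) 1 |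
      latticeCount (d + 1) (P + e) y = 1} := by
  obtain rfl : P = truncatedCube d := hP
  obtain rfl : e = verticalSegment d := he
  have i₀ : Fin d := ⟨0, by omega⟩
  refine ⟨?_, ?_⟩
  · filter_upwards [ae_restrict_of_ae (ae_eval_ne_intCast (Fin.last d)),
      ae_restrict_of_ae (ae_eval_ne_intCast i₀.castSucc)] with y hy_last hy_first
    exact ⟨latticeCount_eq_zero_of_eval_eq_zero _ (fun v hv => hv.2.1) hy_last,
      latticeCount_eq_zero_of_eval_eq_zero _ (fun v hv => hv.1 i₀) hy_first⟩
  · set box : Set (Fin (d + 1) → ℝ) := univ.pi fun _ => Ioo (1 / 3) (2 / 3)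
    have hbox : 0 < volume box :=
      (isOpen_set_pi finite_univ fun _ _ => isOpen_Ioo).measure_pos volume
        ⟨fun _ => 1 / 2, fun _ _ => by norm_num⟩
    refine hbox.trans_le (measure_mono fun y hy => ?_)
    have hy' : ∀ j, y j ∈ Ioo (0 : ℝ) 1 := fun j =>
      ⟨by linarith [(hy j trivial).1], by linarith [(hy j trivial).2]⟩
    refine ⟨⟨fun j => (hy' j).1.le, fun j => (hy' j).2.le⟩, ?_⟩
    exact latticeCount_eq_one_of_subset_Icc (truncatedCube_add_verticalSegment_subset d) hy'
      (one_sub_mem_truncatedCube_add_verticalSegment hd fun j =>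
        Ioo_subset_Icc_self (hy j trivial))
end
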